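/- arXiv:2305.05102 — 3 statements merged into one kernel-verified Lean document; each statement's English description precedes it below -/
import Mathlib

section
/- Let a(ξ) = ξ²·coth(ξ) for ξ ≠ 0, extended by a(0) = 0. If real numbers ξ, η satisfy a(ξ+η) = a(ξ) + a(η), then ξ = 0 or η = 0 or ξ + η = 0. -/
/-- The ILW dispersion symbol `a(ξ) = ξ² coth ξ`, with `a 0 = 0`
(note `cosh 0 / sinh 0 = 1/0 = 0` by Lean's convention). -/
noncomputable def ilwA (ξ : ℝ) : ℝ := ξ ^ 2 * Real.cosh ξ / Real.sinh ξ

/-!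
`ilwA` is odd, and on `(0, ∞)` it is `x ↦ x · g x` with `g x = x coth x` strictly increasing
(its derivative is `(sinh x cosh x - x) / sinh² x > 0`), so it is strictly superadditive there:
`a(x + y) = x g(x + y) + y g(x + y) > x g x + y g y`.
For an odd function this forbids `f (p + q) = f p + f q` whenever `p` and `q` have the same sign.
A resonance with `ξ, η, ξ + η` all nonzero would produce such a pair among `ξ`, `η`, `-(ξ + η)`:
the three pairwise products multiply to `(ξ η (ξ + η))² > 0`, so one of them is positive.
-/

open Real Set

section OddSuperadditive

variable {f : ℝ → ℝ} (hodd : ∀ x, f (-x) = -f x)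
  (hsup : ∀ x y, 0 < x → 0 < y → f x + f y < f (x + y))
include hodd hsup

lemma map_add_ne_of_mul_pos {x y : ℝ} (hxy : 0 < x * y) : f (x + y) ≠ f x + f y := by
  rcases pos_and_pos_or_neg_and_neg_of_mul_pos hxy with ⟨hx, hy⟩ | ⟨hx, hy⟩
  · exact (hsup x y hx hy).ne'
  · have h := hsup (-x) (-y) (neg_pos.2 hx) (neg_pos.2 hy)
    rw [← neg_add, hodd, hodd, hodd] at h
    exact (by linarith : f x + f y > f (x + y)).ne

lemma eq_zero_or_of_map_add_eq {x y : ℝ} (h : f (x + y) = f x + f y) :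
    x = 0 ∨ y = 0 ∨ x + y = 0 := by
  by_contra! hne
  obtain ⟨hx, hy, hs⟩ := hne
  have hprod : 0 < (x * y) * ((x + y) * -y) * (x * -(x + y)) := by
    have : 0 < (x * y * (x + y)) ^ 2 := by positivity
    linarith [show (x * y) * ((x + y) * -y) * (x * -(x + y)) = (x * y * (x + y)) ^ 2 by ring]
  rcases lt_or_ge 0 (x * y) with hxy | hxy
  · exact map_add_ne_of_mul_pos hodd hsup hxy h
  rcases lt_or_ge 0 ((x + y) * -y) with hsy | hsy
  · refine map_add_ne_of_mul_pos hodd hsup hsy ?_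
    rw [add_neg_cancel_right, hodd, h]
    ring
  rcases lt_or_ge 0 (x * -(x + y)) with hxs | hxs
  · refine map_add_ne_of_mul_pos hodd hsup hxs ?_
    rw [show x + -(x + y) = -y by ring, hodd, hodd, h]
    ring
  · have := mul_nonpos_of_nonneg_of_nonpos (mul_nonneg_of_nonpos_of_nonpos hxy hsy) hxs
    linarith

end OddSuperadditive

lemma lt_sinh_mul_cosh {x : ℝ} (hx : 0 < x) : x < sinh x * cosh x := by
  have h := self_lt_sinh_iff.2 (by linarith : 0 < 2 * x)
  rw [sinh_two_mul] at h
  linarith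

lemma hasDerivAt_mul_cosh_div_sinh {x : ℝ} (hx : sinh x ≠ 0) :
    HasDerivAt (fun x => x * cosh x / sinh x) ((sinh x * cosh x - x) / sinh x ^ 2) x := by
  refine (((hasDerivAt_id' x).mul (hasDerivAt_cosh x)).div (hasDerivAt_sinh x) hx).congr_deriv ?_
  simp only [Pi.mul_apply]
  congr 1
  linear_combination -x * cosh_sq_sub_sinh_sq x

lemma strictMonoOn_mul_cosh_div_sinh : StrictMonoOn (fun x => x * cosh x / sinh x) (Ioi 0) := by
  have hderiv : ∀ x ∈ Ioi (0 : ℝ), HasDerivAt (fun x => x * cosh x / sinh x)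
      ((sinh x * cosh x - x) / sinh x ^ 2) x :=
    fun x hx => hasDerivAt_mul_cosh_div_sinh (sinh_pos_iff.2 hx).ne'
  refine strictMonoOn_of_hasDerivWithinAt_pos (convex_Ioi 0)
    (fun x hx => (hderiv x hx).continuousAt.continuousWithinAt)
    (fun x hx => (hderiv x (interior_subset hx)).hasDerivWithinAt) fun x hx => ?_
  rw [interior_Ioi] at hx
  exact div_pos (sub_pos.2 (lt_sinh_mul_cosh hx)) (pow_pos (sinh_pos_iff.2 hx) 2)

lemma ilwA_eq_mul (x : ℝ) : ilwA x = x * (x * cosh x / sinh x) := by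
  unfold ilwA
  ring

lemma ilwA_neg (x : ℝ) : ilwA (-x) = -ilwA x := by
  unfold ilwA
  rw [sinh_neg, cosh_neg, neg_sq, div_neg]

lemma ilwA_add_lt {x y : ℝ} (hx : 0 < x) (hy : 0 < y) : ilwA x + ilwA y < ilwA (x + y) := by
  have hxy : 0 < x + y := add_pos hx hy
  have gx := strictMonoOn_mul_cosh_div_sinh hx hxy (lt_add_of_pos_right x hy)
  have gy := strictMonoOn_mul_cosh_div_sinh hy hxy (lt_add_of_pos_left y hx)
  simp only at gx gy
  rw [ilwA_eq_mul, ilwA_eq_mul, ilwA_eq_mul, add_mul]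
  exact add_lt_add (mul_lt_mul_of_pos_left gx hx) (mul_lt_mul_of_pos_left gy hy)

theorem ilw_resonances (ξ η : ℝ) (h : ilwA (ξ + η) = ilwA ξ + ilwA η) :
    ξ = 0 ∨ η = 0 ∨ ξ + η = 0 :=
  eq_zero_or_of_map_add_eq ilwA_neg (fun _ _ => ilwA_add_lt) h
end

section
/- Let a(ξ) = ξ²coth(ξ) (a(0)=0) and define m(ξ) = ξ·a′(ξ) − 2a(ξ). Then m is an odd, real-analytic function on ℝ, and there exist K, c > 0 with |m(ξ)| ≤ K·e^{−c|ξ|} for all ξ ∈ ℝ. -/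
/-- `m(ξ) = ξ a'(ξ) − 2 a(ξ)`, measuring the failure of homogeneity of degree 2. -/
noncomputable def ilwM (ξ : ℝ) : ℝ := ξ * deriv ilwA ξ - 2 * ilwA ξ

open Real

theorem AnalyticAt.dslope {𝕜 E : Type*} [NontriviallyNormedField 𝕜] [NormedAddCommGroup E]
    [NormedSpace 𝕜 E] {f : 𝕜 → E} {a x : 𝕜} (ha : AnalyticAt 𝕜 f a) (hx : AnalyticAt 𝕜 f x) :
    AnalyticAt 𝕜 (dslope f a) x := by
  rcases eq_or_ne x a with rfl | hxa
  · obtain ⟨p, hp⟩ := ha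
    exact ⟨p.fslope, hp.has_fpower_series_dslope_fslope⟩
  · have hslope : AnalyticAt 𝕜 (fun y => (y - a)⁻¹ • (f y - f a)) x :=
      ((analyticAt_id.sub analyticAt_const).inv (sub_ne_zero.2 hxa)).smul
        (hx.sub analyticAt_const)
    exact hslope.congr (dslope_eventuallyEq_slope_of_ne f hxa).symm

lemma dslope_sinh_zero_ne_zero (x : ℝ) : dslope sinh 0 x ≠ 0 := by
  rcases eq_or_ne x 0 with rfl | hx
  · simp [dslope_same]
  · rw [dslope_of_ne _ hx, slope_def_field, sinh_zero, sub_zero, sub_zero]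
    exact div_ne_zero (sinh_ne_zero.2 hx) hx

lemma mul_exp_half_le_two_mul_sinh {t : ℝ} (ht : 0 ≤ t) : t * exp (t / 2) ≤ 2 * sinh t := by
  have hsinh : t / 2 ≤ sinh (t / 2) := self_le_sinh_iff.2 (by linarith)
  have hcosh : exp (t / 2) / 2 ≤ cosh (t / 2) := by
    rw [cosh_eq]
    linarith [exp_pos (-(t / 2))]
  calc t * exp (t / 2) = 4 * (t / 2) * (exp (t / 2) / 2) := by ring
    _ ≤ 4 * sinh (t / 2) * cosh (t / 2) := by gcongr
    _ = 2 * sinh t := by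
        conv_rhs => rw [← add_halves t, sinh_add]
        ring

lemma pow_three_div_sinh_sq_le {t : ℝ} (ht : 0 ≤ t) :
    t ^ 3 / sinh t ^ 2 ≤ 8 * exp (-(1 / 2) * t) := by
  rcases ht.eq_or_lt with rfl | htpos
  · simp
  have hsinh := mul_exp_half_le_two_mul_sinh ht
  have hlin : t ≤ 2 * exp (t / 2) := by linarith [add_one_le_exp (t / 2)]
  have hexp : exp (t / 2) ^ 2 = exp t := by rw [← exp_nat_mul]; ring_nf
  calc t ^ 3 / sinh t ^ 2 ≤ t ^ 3 / (t * exp (t / 2) / 2) ^ 2 := by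
        gcongr
        linarith
    _ = 4 * t * exp (-t) := by
        rw [exp_neg]
        field_simp
        linear_combination (-4) * hexp
    _ ≤ 4 * (2 * exp (t / 2)) * exp (-t) := by gcongr
    _ = 8 * exp (-(1 / 2) * t) := by
        rw [mul_assoc, mul_assoc, ← exp_add]
        ring_nf

lemma ilwM_eq (ξ : ℝ) : ilwM ξ = -ξ ^ 3 / sinh ξ ^ 2 := by
  rcases eq_or_ne ξ 0 with rfl | hξ
  · simp [ilwM, ilwA]
  have hs : sinh ξ ≠ 0 := sinh_ne_zero.2 hξ
  have hnum : HasDerivAt (fun x : ℝ => x ^ 2 * cosh x)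
      (2 * ξ * cosh ξ + ξ ^ 2 * sinh ξ) ξ := by
    exact ((hasDerivAt_pow 2 ξ).mul (hasDerivAt_cosh ξ)).congr_deriv (by norm_num)
  have hderiv : deriv ilwA ξ =
      ((2 * ξ * cosh ξ + ξ ^ 2 * sinh ξ) * sinh ξ - ξ ^ 2 * cosh ξ * cosh ξ) / sinh ξ ^ 2 :=
    (hnum.div (hasDerivAt_sinh ξ) hs).deriv
  rw [ilwM, hderiv, ilwA]
  field_simp
  linear_combination (-ξ) * cosh_sq ξ

lemma ilwM_eq_neg_div_dslope_sinh_sq : ilwM = fun ξ => -ξ / dslope sinh 0 ξ ^ 2 := by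
  funext ξ
  rcases eq_or_ne ξ 0 with rfl | hξ
  · simp [ilwM_eq]
  · have hs : sinh ξ ≠ 0 := sinh_ne_zero.2 hξ
    rw [ilwM_eq, dslope_of_ne _ hξ, slope_def_field, sinh_zero, sub_zero, sub_zero]
    field_simp

theorem ilwM_odd_analytic_decay :
    (∀ ξ : ℝ, ilwM (-ξ) = -ilwM ξ) ∧
    (∀ x : ℝ, AnalyticAt ℝ ilwM x) ∧
    ∃ K > (0 : ℝ), ∃ c > (0 : ℝ), ∀ ξ : ℝ, |ilwM ξ| ≤ K * Real.exp (-c * |ξ|) := by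
  refine ⟨fun ξ => ?_, fun x => ?_, 8, by norm_num, 1 / 2, by norm_num, fun ξ => ?_⟩
  · rw [ilwM_eq, ilwM_eq, sinh_neg]
    ring
  · rw [ilwM_eq_neg_div_dslope_sinh_sq]
    exact analyticAt_id.neg.div ((analyticAt_sinh.dslope analyticAt_sinh).pow 2)
      (pow_ne_zero 2 (dslope_sinh_zero_ne_zero x))
  · have habs : |ilwM ξ| = |ξ| ^ 3 / sinh |ξ| ^ 2 := by
      rw [ilwM_eq, abs_div, abs_neg, abs_pow, abs_pow, abs_sinh]
    exact habs ▸ pow_three_div_sinh_sq_le (abs_nonneg ξ)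
end

section
/- Let d(ξ,η) = (1/4)(−1 − tanh(ξ)tanh(η) + tanh(ξ)tanh(ξ+η) + tanh(η)tanh(ξ+η)). Then there exist K, c > 0 such that |d(ξ,η)| ≤ K·exp(−c·min(|ξ|, |η|, |ξ+η|)) for all real ξ, η. -/
/-!
By the addition formulas, `1 + tanh ξ tanh η = cosh (ξ + η) / (cosh ξ cosh η)` and
`tanh ξ + tanh η = sinh (ξ + η) / (cosh ξ cosh η)`, so `cosh² - sinh² = 1` collapses the symbol to
`d(ξ, η) = -1 / (4 cosh ξ cosh η cosh (ξ + η))`. Each factor is at least `1` and one of them is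
`cosh ξ ≥ cosh m ≥ exp m / 2` with `m` the minimum, whence `|d| ≤ exp (-m) / 2`.
-/

open Real

namespace Real

theorem one_add_tanh_mul_tanh (x y : ℝ) :
    1 + tanh x * tanh y = cosh (x + y) / (cosh x * cosh y) := by
  have := (cosh_pos x).ne'
  have := (cosh_pos y).ne'
  rw [tanh_eq_sinh_div_cosh, tanh_eq_sinh_div_cosh, cosh_add]
  field_simp

theorem tanh_add_tanh (x y : ℝ) :
    tanh x + tanh y = sinh (x + y) / (cosh x * cosh y) := by
  have := (cosh_pos x).ne'
  have := (cosh_pos y).ne'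
  rw [tanh_eq_sinh_div_cosh, tanh_eq_sinh_div_cosh, sinh_add]
  field_simp

theorem inv_cosh_le_two_mul_exp_neg_abs (x : ℝ) : (cosh x)⁻¹ ≤ 2 * exp (-|x|) := by
  have hcosh : exp |x| / 2 ≤ cosh x := by
    rw [← cosh_abs, cosh_eq]
    linarith [exp_pos (-|x|)]
  rw [exp_neg, inv_le_comm₀ (cosh_pos x) (by positivity), mul_inv, inv_inv]
  linarith

end Real

theorem d_symbol_eq (ξ η : ℝ) :
    (1 / 4) * (-1 - tanh ξ * tanh η + tanh ξ * tanh (ξ + η) + tanh η * tanh (ξ + η)) =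
      -(4 * (cosh ξ * cosh η * cosh (ξ + η)))⁻¹ := by
  have := (cosh_pos ξ).ne'
  have := (cosh_pos η).ne'
  have := (cosh_pos (ξ + η)).ne'
  have hsum : -1 - tanh ξ * tanh η + tanh ξ * tanh (ξ + η) + tanh η * tanh (ξ + η) =
      (sinh (ξ + η) ^ 2 - cosh (ξ + η) ^ 2) / (cosh ξ * cosh η * cosh (ξ + η)) := by
    rw [show -1 - tanh ξ * tanh η + tanh ξ * tanh (ξ + η) + tanh η * tanh (ξ + η) =
        (tanh ξ + tanh η) * tanh (ξ + η) - (1 + tanh ξ * tanh η) by ring,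
      tanh_add_tanh, one_add_tanh_mul_tanh, tanh_eq_sinh_div_cosh]
    field_simp
  rw [hsum, sinh_sq]
  field_simp
  ring

theorem d_symbol_decay :
    ∃ K > (0 : ℝ), ∃ c > (0 : ℝ), ∀ ξ η : ℝ,
      |(1 / 4) * (-1 - Real.tanh ξ * Real.tanh η + Real.tanh ξ * Real.tanh (ξ + η) +
          Real.tanh η * Real.tanh (ξ + η))| ≤
        K * Real.exp (-c * min |ξ| (min |η| |ξ + η|)) := by
  refine ⟨1 / 2, by norm_num, 1, one_pos, fun ξ η => ?_⟩
  set m := min |ξ| (min |η| |ξ + η|)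
  have hm_nonneg : 0 ≤ m := le_min (abs_nonneg ξ) (le_min (abs_nonneg η) (abs_nonneg _))
  have hprod : cosh m ≤ cosh ξ * cosh η * cosh (ξ + η) := by
    have := one_le_cosh η
    have := one_le_cosh (ξ + η)
    have := cosh_pos ξ
    calc cosh m ≤ cosh ξ * 1 * 1 := by
          rw [mul_one, mul_one, cosh_le_cosh, abs_of_nonneg hm_nonneg]
          exact min_le_left _ _
      _ ≤ cosh ξ * cosh η * cosh (ξ + η) := by gcongr
  rw [d_symbol_eq, abs_neg, abs_of_pos (by positivity), mul_inv, neg_one_mul]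
  calc 4⁻¹ * (cosh ξ * cosh η * cosh (ξ + η))⁻¹ ≤ 4⁻¹ * (cosh m)⁻¹ := by gcongr
    _ ≤ 4⁻¹ * (2 * exp (-|m|)) := by gcongr; exact inv_cosh_le_two_mul_exp_neg_abs m
    _ = 1 / 2 * exp (-m) := by rw [abs_of_nonneg hm_nonneg]; ring
end
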